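/- Let (M, ≤) be a linear order and let D ⊆ M^k (k ≥ 1) be a set of k-tuples, ordered coordinatewise. Then D is an antichain in the product (coordinatewise) order if and only if for every index i, the set G_i = {(x_1,…,x_{i-1},x_{i+1},…,x_k, x_i) : (x_1,…,x_k) ∈ D} is the graph of a partial strictly decreasing function from M^{k-1} (with the coordinatewise order) to M. -/

import Mathlib

section

variable {ι α : Type*}

theorem Pi.le_of_apply_le_of_forall_ne_le [Preorder α] {x y : ι → α} {i : ι}
    (hi : x i ≤ y i) (h : ∀ j, j ≠ i → x j ≤ y j) : x ≤ y := by
  intro j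
  rcases eq_or_ne j i with rfl | hj
  · exact hi
  · exact h j hj

variable [LinearOrder α] {D : Set (ι → α)} {x y : ι → α} {i : ι}

-- Points that differ at most in the linearly ordered coordinate `i` are comparable.
theorem IsAntichain.eq_of_forall_ne_eq (hD : IsAntichain (· ≤ ·) D) (hx : x ∈ D) (hy : y ∈ D)
    (h : ∀ j, j ≠ i → x j = y j) : x = y := by
  rcases le_total (x i) (y i) with hxy | hyx
  · exact hD.eq hx hy (Pi.le_of_apply_le_of_forall_ne_le hxy fun j hj => (h j hj).le)
  · exact (hD.eq hy hx (Pi.le_of_apply_le_of_forall_ne_le hyx fun j hj => (h j hj).ge)).symm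

theorem IsAntichain.apply_lt_of_forall_ne_le (hD : IsAntichain (· ≤ ·) D) (hx : x ∈ D)
    (hy : y ∈ D) (hle : ∀ j, j ≠ i → x j ≤ y j) (hne : ∃ j, j ≠ i ∧ x j ≠ y j) : y i < x i := by
  obtain ⟨j, -, hj⟩ := hne
  by_contra! hi
  exact hj (congrFun (hD.eq hx hy (Pi.le_of_apply_le_of_forall_ne_le hi hle)) j)

/-- If `x < y` in `D`, pick a coordinate `i` where `x i < y i`: either `x` and `y` agree off `i`,
violating the first condition, or they differ off `i`, and the second forces `y i < x i`. -/
theorem isAntichain_of_forall_apply_eq_of_forall_apply_lt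
    (heq : ∀ i, ∀ x ∈ D, ∀ y ∈ D, (∀ j, j ≠ i → x j = y j) → x i = y i)
    (hlt : ∀ i, ∀ x ∈ D, ∀ y ∈ D, (∀ j, j ≠ i → x j ≤ y j) → (∃ j, j ≠ i ∧ x j ≠ y j) →
      y i < x i) :
    IsAntichain (· ≤ ·) D := by
  intro x hx y hy hne hle
  obtain ⟨i, hi⟩ := Function.ne_iff.mp hne
  by_cases hoff : ∀ j, j ≠ i → x j = y j
  · exact hi (heq i x hx y hy hoff)
  · push Not at hoff
    exact (hlt i x hx y hy (fun j _ => hle j) hoff).not_ge (hle i)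

end

theorem stmt_0_general {M : Type*} [LinearOrder M] {k : ℕ} (D : Set (Fin k → M)) :
    IsAntichain (· ≤ ·) D ↔
      ∀ i : Fin k,
        (∀ x ∈ D, ∀ y ∈ D, (∀ j, j ≠ i → x j = y j) → x i = y i) ∧
        (∀ x ∈ D, ∀ y ∈ D, (∀ j, j ≠ i → x j ≤ y j) → (∃ j, j ≠ i ∧ x j ≠ y j) →
          y i < x i) :=
  ⟨fun hD i =>
    ⟨fun _ hx _ hy h => congrFun (hD.eq_of_forall_ne_eq hx hy h) i,
      fun _ hx _ hy => hD.apply_lt_of_forall_ne_le hx hy⟩,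
    fun h => isAntichain_of_forall_apply_eq_of_forall_apply_lt
      (fun i => (h i).1) (fun i => (h i).2)⟩

/-- In a linear order `M`, a set `D ⊆ M^k` (k ≥ 1) is an antichain in the
coordinatewise order iff for every index `i`, the set
`G_i = {(x₁,…,x_{i-1},x_{i+1},…,x_k, x_i) : x ∈ D}` is the graph of a partial strictly
decreasing function from `M^{k-1}` (coordinatewise order) to `M`. -/
theorem stmt_0 {M : Type*} [LinearOrder M] {k : ℕ} (hk : 1 ≤ k) (D : Set (Fin k → M)) :
    IsAntichain (· ≤ ·) D ↔
      ∀ i : Fin k,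
        (∀ x ∈ D, ∀ y ∈ D, (∀ j, j ≠ i → x j = y j) → x i = y i) ∧
        (∀ x ∈ D, ∀ y ∈ D, (∀ j, j ≠ i → x j ≤ y j) → (∃ j, j ≠ i ∧ x j ≠ y j) →
          y i < x i) :=
  stmt_0_general D
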